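/- Let x̄ ∈ F be a feasible point of (MPSC) and assume MPSC-WCR holds at x̄. Then MPSC-WSOCQ holds at x̄. -/

import Mathlib

open Set Filter Topology Metric

noncomputable section

namespace MPSC

abbrev Vec (n : ℕ) := EuclideanSpace ℝ (Fin n)

variable {n m p l : ℕ}

open scoped Classical in
/-- Sum of a function over an index set (finite ambient type). -/
noncomputable def sumOver {α β : Type*} [Fintype α] [AddCommMonoid β]
    (S : Set α) (v : α → β) : β :=
  ∑ a, if a ∈ S then v a else 0

/-- The feasible set of (MPSC). -/
def Feas (g : Fin m → Vec n → ℝ) (h : Fin p → Vec n → ℝ)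
    (G H : Fin l → Vec n → ℝ) : Set (Vec n) :=
  {x | (∀ i, g i x ≤ 0) ∧ (∀ j, h j x = 0) ∧ ∀ k, G k x * H k x = 0}

/-- Index set of active inequality constraints. -/
def Ig (g : Fin m → Vec n → ℝ) (xb : Vec n) : Set (Fin m) := {i | g i xb = 0}

def IG (G H : Fin l → Vec n → ℝ) (xb : Vec n) : Set (Fin l) :=
  {k | G k xb = 0 ∧ H k xb ≠ 0}

def IH (G H : Fin l → Vec n → ℝ) (xb : Vec n) : Set (Fin l) :=
  {k | G k xb ≠ 0 ∧ H k xb = 0}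

def IGH (G H : Fin l → Vec n → ℝ) (xb : Vec n) : Set (Fin l) :=
  {k | G k xb = 0 ∧ H k xb = 0}

/-- (β1, β2) is a disjoint bipartition of I_GH. -/
def Partition (G H : Fin l → Vec n → ℝ) (xb : Vec n) (β1 β2 : Set (Fin l)) : Prop :=
  β1 ∩ β2 = ∅ ∧ β1 ∪ β2 = IGH G H xb

/-- Branch feasible set. -/
def BranchFeas (g : Fin m → Vec n → ℝ) (h : Fin p → Vec n → ℝ)
    (G H : Fin l → Vec n → ℝ) (xb : Vec n) (β1 β2 : Set (Fin l)) : Set (Vec n) :=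
  {x | (∀ i, g i x ≤ 0) ∧ (∀ j, h j x = 0) ∧
    (∀ k ∈ IG G H xb ∪ β1, G k x = 0) ∧ ∀ k ∈ IH G H xb ∪ β2, H k x = 0}

/-- Bouligand tangent cone, as defined in the paper. -/
def tangentCone (Ω : Set (Vec n)) (xb : Vec n) : Set (Vec n) :=
  {d | ∃ t : ℕ → ℝ, ∃ x : ℕ → Vec n, (∀ k, 0 ≤ t k) ∧ (∀ k, x k ∈ Ω) ∧
    Tendsto x atTop (nhds xb) ∧ Tendsto (fun k => t k • (x k - xb)) atTop (nhds d)}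

/-- MPSC linearization cone. -/
def LCone (g : Fin m → Vec n → ℝ) (h : Fin p → Vec n → ℝ)
    (G H : Fin l → Vec n → ℝ) (xb : Vec n) : Set (Vec n) :=
  {d | (∀ i ∈ Ig g xb, fderiv ℝ (g i) xb d ≤ 0) ∧ (∀ j, fderiv ℝ (h j) xb d = 0) ∧
    (∀ k ∈ IG G H xb, fderiv ℝ (G k) xb d = 0) ∧ (∀ k ∈ IH G H xb, fderiv ℝ (H k) xb d = 0) ∧
    ∀ k ∈ IGH G H xb, fderiv ℝ (G k) xb d * fderiv ℝ (H k) xb d = 0}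

/-- Branch linearization cone. -/
def BranchLCone (g : Fin m → Vec n → ℝ) (h : Fin p → Vec n → ℝ)
    (G H : Fin l → Vec n → ℝ) (xb : Vec n) (β1 β2 : Set (Fin l)) : Set (Vec n) :=
  {d | (∀ i ∈ Ig g xb, fderiv ℝ (g i) xb d ≤ 0) ∧ (∀ j, fderiv ℝ (h j) xb d = 0) ∧
    (∀ k ∈ IG G H xb ∪ β1, fderiv ℝ (G k) xb d = 0) ∧
    ∀ k ∈ IH G H xb ∪ β2, fderiv ℝ (H k) xb d = 0}

/-- MPSC critical subspace. -/
def CritSubspace (g : Fin m → Vec n → ℝ) (h : Fin p → Vec n → ℝ)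
    (G H : Fin l → Vec n → ℝ) (xb : Vec n) : Set (Vec n) :=
  {d | (∀ i ∈ Ig g xb, fderiv ℝ (g i) xb d = 0) ∧ (∀ j, fderiv ℝ (h j) xb d = 0) ∧
    (∀ k ∈ IG G H xb ∪ IGH G H xb, fderiv ℝ (G k) xb d = 0) ∧
    ∀ k ∈ IH G H xb ∪ IGH G H xb, fderiv ℝ (H k) xb d = 0}

/-- Rank (dimension of the span) of the family of gradients
{∇g_i(x)}_{i∈I1} ∪ {∇h_j(x)}_j ∪ {∇G_k(x)}_{k∈I3} ∪ {∇H_k(x)}_{k∈I4}. -/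
def gradRank (g : Fin m → Vec n → ℝ) (h : Fin p → Vec n → ℝ)
    (G H : Fin l → Vec n → ℝ) (I1 : Set (Fin m)) (I3 I4 : Set (Fin l)) (x : Vec n) : ℕ :=
  Module.finrank ℝ ↥(Submodule.span ℝ
    ((fun i => gradient (g i) x) '' I1 ∪ Set.range (fun j => gradient (h j) x) ∪
     (fun k => gradient (G k) x) '' I3 ∪ (fun k => gradient (H k) x) '' I4))

/-- MPSC-LICQ. -/
def LICQ (g : Fin m → Vec n → ℝ) (h : Fin p → Vec n → ℝ)
    (G H : Fin l → Vec n → ℝ) (xb : Vec n) : Prop :=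
  ∀ (lam : Fin m → ℝ) (ρ : Fin p → ℝ) (μ ν : Fin l → ℝ),
    (∀ i, i ∉ Ig g xb → lam i = 0) →
    (∀ k, k ∉ IG G H xb ∪ IGH G H xb → μ k = 0) →
    (∀ k, k ∉ IH G H xb ∪ IGH G H xb → ν k = 0) →
    ∑ i, lam i • gradient (g i) xb + ∑ j, ρ j • gradient (h j) xb +
      ∑ k, μ k • gradient (G k) xb + ∑ k, ν k • gradient (H k) xb = 0 →
    lam = 0 ∧ ρ = 0 ∧ μ = 0 ∧ ν = 0

/-- MPSC-RCRCQ. -/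
def RCRCQ (g : Fin m → Vec n → ℝ) (h : Fin p → Vec n → ℝ)
    (G H : Fin l → Vec n → ℝ) (xb : Vec n) : Prop :=
  ∃ ε > (0:ℝ), ∀ I1 : Set (Fin m), I1 ⊆ Ig g xb →
    ∀ I3 I4 : Set (Fin l), I3 ⊆ IGH G H xb → I4 ⊆ IGH G H xb →
      ∀ x : Vec n, ‖x - xb‖ < ε →
        gradRank g h G H I1 (I3 ∪ IG G H xb) (I4 ∪ IH G H xb) x =
        gradRank g h G H I1 (I3 ∪ IG G H xb) (I4 ∪ IH G H xb) xb

/-- MPSC-WCR. -/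
def WCR (g : Fin m → Vec n → ℝ) (h : Fin p → Vec n → ℝ)
    (G H : Fin l → Vec n → ℝ) (xb : Vec n) : Prop :=
  ∃ ε > (0:ℝ), ∀ x : Vec n, ‖x - xb‖ < ε →
    gradRank g h G H (Ig g xb) (IG G H xb ∪ IGH G H xb) (IH G H xb ∪ IGH G H xb) x =
    gradRank g h G H (Ig g xb) (IG G H xb ∪ IGH G H xb) (IH G H xb ∪ IGH G H xb) xb

/-- MPSC-PWCR. -/
def PWCR (g : Fin m → Vec n → ℝ) (h : Fin p → Vec n → ℝ)
    (G H : Fin l → Vec n → ℝ) (xb : Vec n) : Prop :=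
  ∀ β1 β2 : Set (Fin l), Partition G H xb β1 β2 →
    ∃ ε > (0:ℝ), ∀ x : Vec n, ‖x - xb‖ < ε →
      gradRank g h G H (Ig g xb) (IG G H xb ∪ β1) (IH G H xb ∪ β2) x =
      gradRank g h G H (Ig g xb) (IG G H xb ∪ β1) (IH G H xb ∪ β2) xb

/-- The index set I_g^- associated with a branch (β1, β2). -/
def IgMinus (g : Fin m → Vec n → ℝ) (h : Fin p → Vec n → ℝ)
    (G H : Fin l → Vec n → ℝ) (xb : Vec n) (β1 β2 : Set (Fin l)) : Set (Fin m) :=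
  {i | i ∈ Ig g xb ∧ ∃ (lam : Fin m → ℝ) (ρ : Fin p → ℝ) (μ ν : Fin l → ℝ),
    (∀ i', 0 ≤ lam i') ∧ (∀ i', i' ∉ Ig g xb \ {i} → lam i' = 0) ∧
    (∀ k, k ∉ IG G H xb ∪ β1 → μ k = 0) ∧ (∀ k, k ∉ IH G H xb ∪ β2 → ν k = 0) ∧
    -gradient (g i) xb = ∑ i', lam i' • gradient (g i') xb + ∑ j, ρ j • gradient (h j) xb +
      ∑ k, μ k • gradient (G k) xb + ∑ k, ν k • gradient (H k) xb}

/-- MPSC-PCRSC. -/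
def PCRSC (g : Fin m → Vec n → ℝ) (h : Fin p → Vec n → ℝ)
    (G H : Fin l → Vec n → ℝ) (xb : Vec n) : Prop :=
  ∀ β1 β2 : Set (Fin l), Partition G H xb β1 β2 →
    ∃ ε > (0:ℝ), ∀ x : Vec n, ‖x - xb‖ < ε →
      gradRank g h G H (IgMinus g h G H xb β1 β2) (IG G H xb ∪ β1) (IH G H xb ∪ β2) x =
      gradRank g h G H (IgMinus g h G H xb β1 β2) (IG G H xb ∪ β1) (IH G H xb ∪ β2) xb

/-- A twice differentiable arc on [0, δ) (one-sided at the endpoint 0),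
with first derivative ξ'. -/
def TwiceDiffArc (δ : ℝ) (ξ ξ' : ℝ → Vec n) : Prop :=
  (∀ t ∈ Ico (0:ℝ) δ, HasDerivWithinAt ξ (ξ' t) (Ico (0:ℝ) δ) t) ∧
  ∀ t ∈ Ico (0:ℝ) δ, DifferentiableWithinAt ℝ ξ' (Ico (0:ℝ) δ) t

/-- MPSC-SSOCQ. -/
def SSOCQ (g : Fin m → Vec n → ℝ) (h : Fin p → Vec n → ℝ)
    (G H : Fin l → Vec n → ℝ) (xb : Vec n) : Prop :=
  ∀ d ∈ LCone g h G H xb, d ≠ 0 →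
    ∃ δ > (0:ℝ), ∃ J K : Set (Fin l), J ⊆ IGH G H xb ∧ K ⊆ IGH G H xb ∧
      ∃ ξ ξ' : ℝ → Vec n, TwiceDiffArc δ ξ ξ' ∧
        (∀ t ∈ Ico (0:ℝ) δ, ξ t ∈ Feas g h G H) ∧
        ξ 0 = xb ∧ ξ' 0 = d ∧
        (∀ t ∈ Ico (0:ℝ) δ, ∀ i ∈ Ig g xb, fderiv ℝ (g i) xb d = 0 → g i (ξ t) = 0) ∧
        (∀ t ∈ Ico (0:ℝ) δ, ∀ k ∈ IG G H xb ∪ J, G k (ξ t) = 0) ∧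
        ∀ t ∈ Ico (0:ℝ) δ, ∀ k ∈ IH G H xb ∪ K, H k (ξ t) = 0

/-- MPSC-WSOCQ. -/
def WSOCQ (g : Fin m → Vec n → ℝ) (h : Fin p → Vec n → ℝ)
    (G H : Fin l → Vec n → ℝ) (xb : Vec n) : Prop :=
  ∀ d ∈ CritSubspace g h G H xb, d ≠ 0 →
    ∃ δ > (0:ℝ), ∃ J K : Set (Fin l), J ⊆ IGH G H xb ∧ K ⊆ IGH G H xb ∧
      ∃ ζ ζ' : ℝ → Vec n, TwiceDiffArc δ ζ ζ' ∧
        (∀ t ∈ Ico (0:ℝ) δ, ζ t ∈ Feas g h G H) ∧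
        ζ 0 = xb ∧ ζ' 0 = d ∧
        (∀ t ∈ Ico (0:ℝ) δ, ∀ i ∈ Ig g xb, g i (ζ t) = 0) ∧
        (∀ t ∈ Ico (0:ℝ) δ, ∀ k ∈ IG G H xb ∪ J, G k (ζ t) = 0) ∧
        ∀ t ∈ Ico (0:ℝ) δ, ∀ k ∈ IH G H xb ∪ K, H k (ζ t) = 0

/-- The S-stationarity system for multipliers (λ, ρ, μ, ν) at xb. -/
def SStationarySystem (f : Vec n → ℝ) (g : Fin m → Vec n → ℝ) (h : Fin p → Vec n → ℝ)
    (G H : Fin l → Vec n → ℝ) (xb : Vec n)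
    (lam : Fin m → ℝ) (ρ : Fin p → ℝ) (μ ν : Fin l → ℝ) : Prop :=
  (∀ i, 0 ≤ lam i) ∧ (∀ i, lam i * g i xb = 0) ∧
  (∀ k ∈ IH G H xb ∪ IGH G H xb, μ k = 0) ∧
  (∀ k ∈ IG G H xb ∪ IGH G H xb, ν k = 0) ∧
  gradient f xb + ∑ i, lam i • gradient (g i) xb + ∑ j, ρ j • gradient (h j) xb +
    ∑ k, μ k • gradient (G k) xb + ∑ k, ν k • gradient (H k) xb = 0

def SStationary (f : Vec n → ℝ) (g : Fin m → Vec n → ℝ) (h : Fin p → Vec n → ℝ)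
    (G H : Fin l → Vec n → ℝ) (xb : Vec n) : Prop :=
  ∃ (lam : Fin m → ℝ) (ρ : Fin p → ℝ) (μ ν : Fin l → ℝ),
    SStationarySystem f g h G H xb lam ρ μ ν

/-- The M-stationarity system for multipliers (λ, ρ, μ, ν) at xb. -/
def MStationarySystem (f : Vec n → ℝ) (g : Fin m → Vec n → ℝ) (h : Fin p → Vec n → ℝ)
    (G H : Fin l → Vec n → ℝ) (xb : Vec n)
    (lam : Fin m → ℝ) (ρ : Fin p → ℝ) (μ ν : Fin l → ℝ) : Prop :=
  (∀ i, 0 ≤ lam i) ∧ (∀ i, lam i * g i xb = 0) ∧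
  (∀ k ∈ IH G H xb, μ k = 0) ∧ (∀ k ∈ IG G H xb, ν k = 0) ∧
  (∀ k ∈ IGH G H xb, μ k * ν k = 0) ∧
  gradient f xb + ∑ i, lam i • gradient (g i) xb + ∑ j, ρ j • gradient (h j) xb +
    ∑ k, μ k • gradient (G k) xb + ∑ k, ν k • gradient (H k) xb = 0

def MStationary (f : Vec n → ℝ) (g : Fin m → Vec n → ℝ) (h : Fin p → Vec n → ℝ)
    (G H : Fin l → Vec n → ℝ) (xb : Vec n) : Prop :=
  ∃ (lam : Fin m → ℝ) (ρ : Fin p → ℝ) (μ ν : Fin l → ℝ),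
    MStationarySystem f g h G H xb lam ρ μ ν

/-- Local optimality for (MPSC). -/
def LocallyOptimal (f : Vec n → ℝ) (g : Fin m → Vec n → ℝ) (h : Fin p → Vec n → ℝ)
    (G H : Fin l → Vec n → ℝ) (xb : Vec n) : Prop :=
  xb ∈ Feas g h G H ∧ ∃ ε > (0:ℝ), ∀ x ∈ Feas g h G H, ‖x - xb‖ < ε → f xb ≤ f x

/-- Hessian quadratic form dᵀ∇²φ(x)d. -/
def hessForm (φ : Vec n → ℝ) (x d : Vec n) : ℝ :=
  iteratedFDeriv ℝ 2 φ x ![d, d]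

/-- The Lagrange function ℓ. -/
def lagr (f : Vec n → ℝ) (g : Fin m → Vec n → ℝ) (h : Fin p → Vec n → ℝ)
    (G H : Fin l → Vec n → ℝ)
    (lam : Fin m → ℝ) (ρ : Fin p → ℝ) (μ ν : Fin l → ℝ) : Vec n → ℝ :=
  fun x => f x + ∑ i, lam i * g i x + ∑ j, ρ j * h j x +
    ∑ k, μ k * G k x + ∑ k, ν k * H k x

/-- Constraint-violation residual. -/
def residual (g : Fin m → Vec n → ℝ) (h : Fin p → Vec n → ℝ)
    (G H : Fin l → Vec n → ℝ) (x : Vec n) : ℝ :=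
  Real.sqrt (∑ i, max (g i x) 0 ^ 2 + ∑ j, h j x ^ 2 + ∑ k, min (G k x ^ 2) (H k x ^ 2))

/-- Penalty function P_κ. -/
def Pen (f : Vec n → ℝ) (g : Fin m → Vec n → ℝ) (h : Fin p → Vec n → ℝ)
    (G H : Fin l → Vec n → ℝ) (κ : ℝ) (x : Vec n) : ℝ :=
  f x + κ * residual g h G H x

/-- MPSC piecewise second-order quasi-normality. -/
def PSOQN (g : Fin m → Vec n → ℝ) (h : Fin p → Vec n → ℝ)
    (G H : Fin l → Vec n → ℝ) (xb : Vec n) : Prop :=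
  ∀ β1 β2 : Set (Fin l), Partition G H xb β1 β2 →
    ¬ ∃ (lam : Fin m → ℝ) (ρ : Fin p → ℝ) (μ ν : Fin l → ℝ),
      (∀ i, 0 ≤ lam i) ∧
      (∀ k, k ∉ IG G H xb ∪ β1 → μ k = 0) ∧ (∀ k, k ∉ IH G H xb ∪ β2 → ν k = 0) ∧
      ¬(lam = 0 ∧ ρ = 0 ∧ μ = 0 ∧ ν = 0) ∧
      (∑ i, lam i • gradient (g i) xb + ∑ j, ρ j • gradient (h j) xb +
        ∑ k, μ k • gradient (G k) xb + ∑ k, ν k • gradient (H k) xb = 0) ∧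
      (∀ d : Vec n, (∀ i ∈ Ig g xb, fderiv ℝ (g i) xb d = 0) →
        (∀ j, fderiv ℝ (h j) xb d = 0) →
        (∀ k ∈ IG G H xb ∪ β1, fderiv ℝ (G k) xb d = 0) →
        (∀ k ∈ IH G H xb ∪ β2, fderiv ℝ (H k) xb d = 0) →
        0 ≤ ∑ i, lam i * hessForm (g i) xb d + ∑ j, ρ j * hessForm (h j) xb d +
          ∑ k, μ k * hessForm (G k) xb d + ∑ k, ν k * hessForm (H k) xb d) ∧
      ∃ xs : ℕ → Vec n, Tendsto xs atTop (nhds xb) ∧ ∀ s,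
        (∀ i, 0 < lam i → 0 < lam i * g i (xs s)) ∧
        (∀ j, ρ j ≠ 0 → 0 < ρ j * h j (xs s)) ∧
        (∀ k, μ k ≠ 0 → 0 < μ k * G k (xs s)) ∧
        (∀ k, ν k ≠ 0 → 0 < ν k * H k (xs s))

/-!
Under MPSC-WCR the gradients of the constraints defining the critical subspace (active
inequalities, equalities, `G_k` for `k ∈ I_G ∪ I_GH`, `H_k` for `k ∈ I_H ∪ I_GH`) have constant
rank near `x̄`. A subfamily whose gradients form a basis of their span at `x̄` stays linearly
independent nearby, so by constant rank it keeps spanning all of them. The implicit function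
theorem for this subfamily gives a `C²` curve through `x̄` with velocity `d̃` on which the
subfamily is constant; its velocity is then orthogonal to every active gradient, so all active
constraints stay zero along it. Inactive inequalities stay negative by continuity, so the curve
is feasible, with `J = K = I_GH`.
-/

end MPSC

open Module Submodule

section LevelSetCurve

variable {E : Type*} [NormedAddCommGroup E] [NormedSpace ℝ E] [CompleteSpace E]
  {F : Type*} [NormedAddCommGroup F] [NormedSpace ℝ F] [FiniteDimensional ℝ F]

theorem ContDiffAt.exists_curve_tangent_levelSet {f : E → F} {a : E} {n : WithTop ℕ∞}
    (hf : ContDiffAt ℝ n f a) (hn : n ≠ 0) (hsurj : (fderiv ℝ f a).range = ⊤) {d : E}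
    (hd : fderiv ℝ f a d = 0) :
    ∃ ζ : ℝ → E, ContDiffAt ℝ n ζ 0 ∧ ζ 0 = a ∧ HasDerivAt ζ d 0 ∧
      ∀ᶠ t in 𝓝 0, f (ζ t) = f a := by
  have := FiniteDimensional.complete ℝ F
  have hs := hf.hasStrictFDerivAt hn
  set φ := hs.implicitFunctionDataOfComplemented f _ hsurj
    (fderiv ℝ f a).ker_closedComplemented_of_finiteDimensional_range
  set ψ := hs.implicitFunction f _ hsurj
  let dK : (fderiv ℝ f a).ker := ⟨d, hd⟩
  refine ⟨fun t => ψ (f a) (t • dK), ?_, by simp [ψ], ?_, ?_⟩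
  · have hpt : φ.prodFun φ.pt = (f a, 0) := by simp [φ, ImplicitFunctionData.prodFun]
    -- `ψ` is definitionally `φ.implicitFunction`, for which Mathlib proves smoothness.
    have hψ := φ.contDiffAt_implicitFunction hf (by simp [φ]; fun_prop) hn
    rw [hpt, ← zero_smul ℝ dK] at hψ
    have hline : ContDiffAt ℝ n (fun t : ℝ => (f a, t • dK)) 0 := by fun_prop
    exact (hψ.comp (0:ℝ) hline :)
  · have hline : HasDerivAt (fun t : ℝ => t • dK) dK 0 := by
      simpa using (hasDerivAt_id (0:ℝ)).smul_const dK
    exact (hs.to_implicitFunction hsurj).hasFDerivAt.comp_hasDerivAt_of_eq (0:ℝ) hline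
      (zero_smul ℝ dK).symm
  · have hline : Tendsto (fun t : ℝ => (f a, t • dK)) (𝓝 0) (𝓝 (f a, 0)) :=
      Continuous.tendsto' (by fun_prop) _ _ (by simp)
    exact hline.eventually (hs.map_implicitFunction_eq hsurj)

end LevelSetCurve

theorem Filter.Eventually.eq_of_deriv_eq_zero {F : Type*} [NormedAddCommGroup F]
    [NormedSpace ℝ F] {f : ℝ → F} {t₀ : ℝ} (hdiff : ∀ᶠ t in 𝓝 t₀, DifferentiableAt ℝ f t)
    (hderiv : ∀ᶠ t in 𝓝 t₀, deriv f t = 0) : ∀ᶠ t in 𝓝 t₀, f t = f t₀ := by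
  obtain ⟨ε, hε, hball⟩ := Metric.eventually_nhds_iff_ball.1 (hdiff.and hderiv)
  filter_upwards [Metric.ball_mem_nhds t₀ hε] with t ht
  exact Metric.isOpen_ball.is_const_of_deriv_eq_zero (convex_ball t₀ ε).isPreconnected
    (fun s hs => (hball s hs).1.differentiableWithinAt) (fun s hs => (hball s hs).2) ht
    (Metric.mem_ball_self hε)

theorem ContDiffAt.eventually_differentiableAt_deriv {F : Type*} [NormedAddCommGroup F]
    [NormedSpace ℝ F] {ζ : ℝ → F} {t₀ : ℝ} (hζ : ContDiffAt ℝ 2 ζ t₀) :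
    ∀ᶠ t in 𝓝 t₀, DifferentiableAt ℝ ζ t ∧ DifferentiableAt ℝ (deriv ζ) t := by
  filter_upwards [hζ.eventually (by simp)] with t ht
  refine ⟨ht.differentiableAt two_ne_zero, ?_⟩
  have h1 : ContDiffAt ℝ 1 (fun s => fderiv ℝ ζ s 1) t :=
    (ht.fderiv_right (m := 1) (by norm_num)).clm_apply contDiffAt_const
  exact h1.differentiableAt one_ne_zero

section ConstantRank

universe u

variable {E : Type*} [NormedAddCommGroup E] [InnerProductSpace ℝ E] [FiniteDimensional ℝ E]

theorem ContDiff.continuous_gradient {φ : E → ℝ} {n : WithTop ℕ∞} (hφ : ContDiff ℝ n φ)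
    (hn : n ≠ 0) : Continuous (gradient φ) :=
  (InnerProductSpace.toDual ℝ E).symm.continuous.comp (hφ.continuous_fderiv hn)

theorem range_fderiv_pi_eq_top_of_linearIndependent_gradient {κ : Type*} [Finite κ]
    {c : κ → E → ℝ} {x : E} (hc : ∀ i, DifferentiableAt ℝ (c i) x)
    (hli : LinearIndependent ℝ fun i => gradient (c i) x) :
    (fderiv ℝ (fun y i => c i y) x).range = ⊤ := by
  have hinj : ((LinearMap.ltoFun ℝ E ℝ ℝ).comp (innerₗ E)).ker = ⊥ :=
    LinearMap.ker_eq_bot'.2 fun v hv => by simpa using congrFun hv v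
  have hfun : LinearIndependent ℝ fun i => ⇑(fderiv ℝ (c i) x) := by
    have hcomp : (fun i => ⇑(fderiv ℝ (c i) x)) =
        (LinearMap.ltoFun ℝ E ℝ ℝ).comp (innerₗ E) ∘ fun i => gradient (c i) x := by
      ext i y
      simp [inner_gradient_left]
    rw [hcomp]
    exact hli.map' _ hinj
  rw [fderiv_pi hc, ← span_eq (LinearMap.range _), LinearMap.coe_range]
  exact span_flip_eq_top_iff_linearIndependent.2 hfun

theorem exists_linearIndependent_subfamily_eventually_span_eq {X : Type*} [TopologicalSpace X]
    {ι : Type u} [Finite ι] {v : X → ι → E} {x₀ : X} (hv : ContinuousAt v x₀)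
    (hrank : ∀ᶠ x in 𝓝 x₀, finrank ℝ (span ℝ (range (v x))) = finrank ℝ (span ℝ (range (v x₀)))) :
    ∃ (κ : Type u) (a : κ → ι), Function.Injective a ∧ LinearIndependent ℝ (v x₀ ∘ a) ∧
      ∀ᶠ x in 𝓝 x₀, span ℝ (range (v x ∘ a)) = span ℝ (range (v x)) := by
  obtain ⟨κ, a, ha, hspan, hli⟩ := exists_linearIndependent' ℝ (v x₀)
  have : Finite κ := .of_injective a ha
  have : Fintype κ := .ofFinite κ
  have hsub : ContinuousAt (fun x => v x ∘ a) x₀ :=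
    (continuous_pi fun j => continuous_apply (a j)).continuousAt.comp hv
  refine ⟨κ, a, ha, hli, ?_⟩
  filter_upwards [hsub.eventually hli.eventually, hrank] with x hxli hxrank
  refine eq_of_le_of_finrank_eq (span_mono (range_comp_subset_range _ _)) ?_
  rw [finrank_span_eq_card hxli, hxrank, ← hspan, finrank_span_eq_card hli]

theorem exists_curve_of_constant_rank {ι : Type*} [Finite ι] {c : ι → E → ℝ} {n : WithTop ℕ∞}
    (hc : ∀ i, ContDiff ℝ n (c i)) (hn : n ≠ 0) {x₀ : E}
    (hrank : ∀ᶠ x in 𝓝 x₀, finrank ℝ (span ℝ (range fun i => gradient (c i) x)) =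
      finrank ℝ (span ℝ (range fun i => gradient (c i) x₀)))
    {d : E} (hd : ∀ i, fderiv ℝ (c i) x₀ d = 0) :
    ∃ ζ : ℝ → E, ContDiffAt ℝ n ζ 0 ∧ ζ 0 = x₀ ∧ HasDerivAt ζ d 0 ∧
      ∀ᶠ t in 𝓝 0, ∀ i, c i (ζ t) = c i x₀ := by
  have hdiff : ∀ i x, DifferentiableAt ℝ (c i) x := fun i x =>
    ((hc i).differentiable hn).differentiableAt
  have hgrad : Continuous fun x i => gradient (c i) x :=
    continuous_pi fun i => (hc i).continuous_gradient hn
  obtain ⟨κ, a, ha, hli, hspan⟩ :=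
    exists_linearIndependent_subfamily_eventually_span_eq hgrad.continuousAt hrank
  have : Finite κ := .of_injective a ha
  have : Fintype κ := .ofFinite κ
  obtain ⟨ζ, hζ, hζ0, hζd, hlevel⟩ :=
    (contDiff_pi.2 fun j => hc (a j)).contDiffAt.exists_curve_tangent_levelSet
      (f := fun y j => c (a j) y) hn
      (range_fderiv_pi_eq_top_of_linearIndependent_gradient (fun j => hdiff (a j) x₀) hli)
      (by rw [fderiv_pi fun j => hdiff (a j) x₀]; exact funext fun j => hd (a j))
  refine ⟨ζ, hζ, hζ0, hζd, ?_⟩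
  have hζx₀ : Tendsto ζ (𝓝 0) (𝓝 x₀) := hζ0 ▸ hζ.continuousAt.tendsto
  have hζdiff : ∀ᶠ t in 𝓝 0, DifferentiableAt ℝ ζ t :=
    ((hζ.of_le (ENat.one_le_iff_ne_zero_withTop.2 hn)).eventually (by simp)).mono
      fun t ht => ht.differentiableAt one_ne_zero
  -- The velocity is orthogonal to the gradients of the subfamily, which span all gradients.
  have hvel : ∀ᶠ t in 𝓝 0, ∀ i, fderiv ℝ (c i) (ζ t) (deriv ζ t) = 0 := by
    filter_upwards [hζdiff, hlevel.eventually_nhds, hζx₀.eventually hspan]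
      with t ht htlevel htspan i
    have hsub : ∀ j, inner ℝ (gradient (c (a j)) (ζ t)) (deriv ζ t) = 0 := fun j => by
      rw [inner_gradient_left, ← fderiv_comp_deriv t (hdiff _ _) ht]
      have hconst : (fun s => c (a j) (ζ s)) =ᶠ[𝓝 t] fun _ => c (a j) x₀ :=
        htlevel.mono fun s hs => congrFun hs j
      exact hconst.deriv_eq.trans (deriv_const t _)
    have htspan' : span ℝ (range fun j => gradient (c (a j)) (ζ t)) =
        span ℝ (range fun i => gradient (c i) (ζ t)) := htspan
    have hmem : gradient (c i) (ζ t) ∈ LinearMap.ker (innerₗ E (deriv ζ t)) := by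
      refine span_le.2 ?_ (htspan' ▸ subset_span (mem_range_self i))
      rintro _ ⟨j, rfl⟩
      simpa [real_inner_comm] using hsub j
    simpa [real_inner_comm, inner_gradient_left] using hmem
  rw [eventually_all]
  intro i
  have hcomp := Filter.Eventually.eq_of_deriv_eq_zero (f := fun t => c i (ζ t))
    (hζdiff.mono fun t ht => (hdiff i _).comp t ht)
    (hζdiff.and hvel |>.mono fun t ht => (fderiv_comp_deriv t (hdiff i _) ht.1).trans (ht.2 i))
  simpa [hζ0] using hcomp

end ConstantRank

namespace MPSC

variable {n m p l : ℕ} (g : Fin m → Vec n → ℝ) (h : Fin p → Vec n → ℝ) (G H : Fin l → Vec n → ℝ)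

def constraintFamily (I1 : Set (Fin m)) (I3 I4 : Set (Fin l)) :
    (I1 ⊕ Fin p) ⊕ (I3 ⊕ I4) → Vec n → ℝ :=
  Sum.elim (Sum.elim (fun i => g i) h) (Sum.elim (fun k => G k) (fun k => H k))

abbrev activeConstraints (xb : Vec n) :=
  constraintFamily g h G H (Ig g xb) (IG G H xb ∪ IGH G H xb) (IH G H xb ∪ IGH G H xb)

theorem gradRank_eq_finrank_span (I1 : Set (Fin m)) (I3 I4 : Set (Fin l)) (x : Vec n) :
    gradRank g h G H I1 I3 I4 x =
      finrank ℝ (span ℝ (range fun i => gradient (constraintFamily g h G H I1 I3 I4 i) x)) := by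
  have hset : (fun i => gradient (g i) x) '' I1 ∪ range (fun j => gradient (h j) x) ∪
      (fun k => gradient (G k) x) '' I3 ∪ (fun k => gradient (H k) x) '' I4 =
      range fun i => gradient (constraintFamily g h G H I1 I3 I4 i) x := by
    ext v
    simp [constraintFamily, Sum.exists, or_assoc]
  rw [gradRank, hset]

variable {g h G H}

theorem contDiff_constraintFamily {k : WithTop ℕ∞} (hg : ∀ i, ContDiff ℝ k (g i))
    (hh : ∀ j, ContDiff ℝ k (h j)) (hG : ∀ i, ContDiff ℝ k (G i)) (hH : ∀ i, ContDiff ℝ k (H i))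
    (I1 : Set (Fin m)) (I3 I4 : Set (Fin l)) (i) :
    ContDiff ℝ k (constraintFamily g h G H I1 I3 I4 i) := by
  rcases i with (i | j) | (i | i)
  exacts [hg i, hh j, hG i, hH i]

theorem activeConstraints_apply_self {xb : Vec n} (hxb : xb ∈ Feas g h G H) (i) :
    activeConstraints g h G H xb i xb = 0 := by
  rcases i with (⟨i, hi⟩ | j) | (⟨i, hi⟩ | ⟨i, hi⟩)
  · exact hi
  · exact hxb.2.1 j
  · rcases hi with hi | hi
    exacts [hi.1, hi.1]
  · rcases hi with hi | hi
    exacts [hi.2, hi.2]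

theorem fderiv_activeConstraints_eq_zero {xb d : Vec n} (hd : d ∈ CritSubspace g h G H xb) (i) :
    fderiv ℝ (activeConstraints g h G H xb i) xb d = 0 := by
  rcases i with (⟨i, hi⟩ | j) | (⟨i, hi⟩ | ⟨i, hi⟩)
  exacts [hd.1 i hi, hd.2.1 j, hd.2.2.1 i hi, hd.2.2.2 i hi]

theorem WCR.eventually_finrank_span_eq {xb : Vec n} (hcq : WCR g h G H xb) :
    ∀ᶠ x in 𝓝 xb, finrank ℝ (span ℝ (range fun i => gradient (activeConstraints g h G H xb i) x)) =
      finrank ℝ (span ℝ (range fun i => gradient (activeConstraints g h G H xb i) xb)) := by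
  obtain ⟨ε, hε, hrank⟩ := hcq
  filter_upwards [Metric.ball_mem_nhds xb hε] with x hx
  simpa only [gradRank_eq_finrank_span] using hrank x (mem_ball_iff_norm.1 hx)

theorem eventually_inactive_lt_zero (hg : ∀ i, Continuous (g i)) {xb : Vec n}
    (hxb : xb ∈ Feas g h G H) : ∀ᶠ x in 𝓝 xb, ∀ i ∉ Ig g xb, g i x < 0 := by
  rw [eventually_all]
  intro i
  by_cases hi : i ∈ Ig g xb
  · exact .of_forall fun _ h => absurd hi h
  · exact ((hg i).tendsto xb).eventually_lt_const (lt_of_le_of_ne (hxb.1 i) hi) |>.mono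
      fun _ hx _ => hx

theorem mem_Feas_of_activeConstraints {xb x : Vec n} (hxb : xb ∈ Feas g h G H)
    (hact : ∀ i, activeConstraints g h G H xb i x = 0) (hinact : ∀ i ∉ Ig g xb, g i x < 0) :
    x ∈ Feas g h G H := by
  refine ⟨fun i => ?_, fun j => hact (.inl (.inr j)), fun k => ?_⟩
  · by_cases hi : i ∈ Ig g xb
    · exact (hact (.inl (.inl ⟨i, hi⟩))).le
    · exact (hinact i hi).le
  · by_cases hGk : G k xb = 0
    · by_cases hHk : H k xb = 0
      · exact mul_eq_zero_of_left (hact (.inr (.inl ⟨k, .inr ⟨hGk, hHk⟩⟩))) _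
      · exact mul_eq_zero_of_left (hact (.inr (.inl ⟨k, .inl ⟨hGk, hHk⟩⟩))) _
    · have hHk : H k xb = 0 := (mul_eq_zero.1 (hxb.2.2 k)).resolve_left hGk
      exact mul_eq_zero_of_right _ (hact (.inr (.inr ⟨k, .inl ⟨hGk, hHk⟩⟩)))

theorem twiceDiffArc_deriv {δ : ℝ} {ζ : ℝ → Vec n}
    (hζ : ∀ t ∈ Ico 0 δ, DifferentiableAt ℝ ζ t ∧ DifferentiableAt ℝ (deriv ζ) t) :
    TwiceDiffArc δ ζ (deriv ζ) :=
  ⟨fun t ht => (hζ t ht).1.hasDerivAt.hasDerivWithinAt,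
    fun t ht => (hζ t ht).2.differentiableWithinAt⟩

theorem wcr_implies_wsocq_general {n m p l : ℕ} (g : Fin m → Vec n → ℝ)
    (h : Fin p → Vec n → ℝ) (G H : Fin l → Vec n → ℝ)
    (hg : ∀ i, ContDiff ℝ 2 (g i)) (hh : ∀ j, ContDiff ℝ 2 (h j))
    (hG : ∀ k, ContDiff ℝ 2 (G k)) (hH : ∀ k, ContDiff ℝ 2 (H k))
    (xb : Vec n) (hxb : xb ∈ Feas g h G H)
    (hcq : WCR g h G H xb) : WSOCQ g h G H xb := by
  intro d hd _
  obtain ⟨ζ, hζ, hζ0, hζd, hζact⟩ := exists_curve_of_constant_rank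
    (contDiff_constraintFamily hg hh hG hH _ _ _) two_ne_zero hcq.eventually_finrank_span_eq
    (fderiv_activeConstraints_eq_zero hd)
  have hinact : ∀ᶠ t in 𝓝 0, ∀ i ∉ Ig g xb, g i (ζ t) < 0 :=
    (hζ0 ▸ hζ.continuousAt.tendsto).eventually
      (eventually_inactive_lt_zero (fun i => (hg i).continuous) hxb)
  obtain ⟨δ, hδ, hIco⟩ := mem_nhdsGE_iff_exists_Ico_subset.1 <| nhdsWithin_le_nhds <|
    hζ.eventually_differentiableAt_deriv.and (hζact.and hinact)
  have hact : ∀ t ∈ Ico 0 δ, ∀ i, activeConstraints g h G H xb i (ζ t) = 0 :=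
    fun t ht i => ((hIco ht).2.1 i).trans (activeConstraints_apply_self hxb i)
  refine ⟨δ, hδ, IGH G H xb, IGH G H xb, subset_rfl, subset_rfl, ζ, deriv ζ,
    twiceDiffArc_deriv fun t ht => (hIco ht).1,
    fun t ht => mem_Feas_of_activeConstraints hxb (hact t ht) (hIco ht).2.2, hζ0, hζd.deriv,
    fun t ht i hi => hact t ht (.inl (.inl ⟨i, hi⟩)),
    fun t ht k hk => hact t ht (.inr (.inl ⟨k, hk⟩)),
    fun t ht k hk => hact t ht (.inr (.inr ⟨k, hk⟩))⟩

theorem wcr_implies_wsocq {n m p l : ℕ} (f : Vec n → ℝ) (g : Fin m → Vec n → ℝ)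
    (h : Fin p → Vec n → ℝ) (G H : Fin l → Vec n → ℝ)
    (hf : ContDiff ℝ 2 f) (hg : ∀ i, ContDiff ℝ 2 (g i)) (hh : ∀ j, ContDiff ℝ 2 (h j))
    (hG : ∀ k, ContDiff ℝ 2 (G k)) (hH : ∀ k, ContDiff ℝ 2 (H k))
    (xb : Vec n) (hxb : xb ∈ Feas g h G H)
    (hcq : WCR g h G H xb) : WSOCQ g h G H xb :=
  wcr_implies_wsocq_general g h G H hg hh hG hH xb hxb hcq

end MPSC
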